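/- Let G = (X ⊔ Y, E) be a finite bipartite graph that admits a matching saturating every vertex of X, and let W be an envy-free matching in G. Then there exists a matching in G that saturates every vertex of X and contains W as a subset. -/

import Mathlib

attribute [local instance] Classical.propDecidable

variable {V : Type*}

/-- `X, Y` form a bipartition of the vertex set of the simple graph `G`:
they are disjoint, cover all vertices, and every edge joins `X` to `Y`. -/
def IsBipartition [Fintype V] (G : SimpleGraph V) (X Y : Finset V) : Prop :=
  Disjoint X Y ∧ X ∪ Y = Finset.univ ∧
    ∀ ⦃u v : V⦄, G.Adj u v → (u ∈ X ∧ v ∈ Y) ∨ (u ∈ Y ∧ v ∈ X)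

/-- `M` is a matching of `G` all of whose edges go from `X'` to `Y'`
(i.e. a matching of the induced subgraph `G[X', Y']`), recorded as a set of
pairwise vertex-disjoint adjacent pairs. -/
def IsBipMatching (G : SimpleGraph V) (X' Y' : Finset V) (M : Finset (V × V)) : Prop :=
  (∀ p ∈ M, p.1 ∈ X' ∧ p.2 ∈ Y' ∧ G.Adj p.1 p.2) ∧
  ∀ p ∈ M, ∀ q ∈ M, p ≠ q → p.1 ≠ q.1 ∧ p.2 ≠ q.2

/-- `M` is envy-free w.r.t. `X`: no unmatched vertex of `X` is adjacent to a
matched vertex on the `Y`-side of `M`. -/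
def EnvyFree (G : SimpleGraph V) (X : Finset V) (M : Finset (V × V)) : Prop :=
  ∀ x ∈ X, x ∉ M.image Prod.fst → ∀ y ∈ M.image Prod.snd, ¬ G.Adj x y

/-- The (bipartite) graph `G[X ∪ Y]` is `Y`-path-saturated: for some `k ≥ 1` there are
partitions `X = X_0 ⊔ ⋯ ⊔ X_k` and `Y = Y_1 ⊔ ⋯ ⊔ Y_k` such that for `1 ≤ i ≤ k`
there is a perfect matching between `X_i` and `Y_i`, and every vertex of `Y_i` is
adjacent to some vertex of `X_{i-1}`. -/
def YPathSaturated (G : SimpleGraph V) (X Y : Finset V) : Prop :=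
  ∃ k : ℕ, 1 ≤ k ∧ ∃ A B : ℕ → Finset V,
    (∀ i ∈ Finset.range (k + 1), ∀ j ∈ Finset.range (k + 1), i ≠ j → Disjoint (A i) (A j)) ∧
    (∀ i ∈ Finset.Icc 1 k, ∀ j ∈ Finset.Icc 1 k, i ≠ j → Disjoint (B i) (B j)) ∧
    X = (Finset.range (k + 1)).biUnion A ∧
    Y = (Finset.Icc 1 k).biUnion B ∧
    (∀ i ∈ Finset.Icc 1 k, ∃ f : V → V,
      Set.BijOn f (A i) (B i) ∧ ∀ x ∈ A i, G.Adj x (f x)) ∧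
    (∀ i ∈ Finset.Icc 1 k, ∀ y ∈ B i, ∃ x ∈ A (i - 1), G.Adj x y)

/-!
Extend `W` by the edges of an `X`-saturating matching `M` at the vertices of `X` that `W` leaves
unmatched. Such a vertex is adjacent to the `Y`-end of its `M`-edge, so by envy-freeness that end is
not matched by `W`; hence the union is again a matching, and it saturates `X`.
-/

namespace IsBipMatching

variable {G : SimpleGraph V} {X' Y' : Finset V} {M N : Finset (V × V)}

theorem subset (hM : IsBipMatching G X' Y' M) (hNM : N ⊆ M) : IsBipMatching G X' Y' N :=
  ⟨fun p hp => hM.1 p (hNM hp), fun p hp q hq => hM.2 p (hNM hp) q (hNM hq)⟩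

theorem union (hM : IsBipMatching G X' Y' M) (hN : IsBipMatching G X' Y' N)
    (hfst : Disjoint (M.image Prod.fst) (N.image Prod.fst))
    (hsnd : Disjoint (M.image Prod.snd) (N.image Prod.snd)) :
    IsBipMatching G X' Y' (M ∪ N) := by
  have cross : ∀ p ∈ M, ∀ q ∈ N, p.1 ≠ q.1 ∧ p.2 ≠ q.2 := fun p hp q hq =>
    ⟨fun h => Finset.disjoint_left.1 hfst (Finset.mem_image_of_mem _ hp)
        (h ▸ Finset.mem_image_of_mem _ hq),
      fun h => Finset.disjoint_left.1 hsnd (Finset.mem_image_of_mem _ hp)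
        (h ▸ Finset.mem_image_of_mem _ hq)⟩
  refine ⟨fun p hp => (Finset.mem_union.1 hp).elim (hM.1 p) (hN.1 p), fun p hp q hq hpq => ?_⟩
  rcases Finset.mem_union.1 hp with hp | hp <;> rcases Finset.mem_union.1 hq with hq | hq
  · exact hM.2 p hp q hq hpq
  · exact cross p hp q hq
  · exact (cross q hq p hp).imp Ne.symm Ne.symm
  · exact hN.2 p hp q hq hpq

end IsBipMatching

noncomputable def extendMatching (W M : Finset (V × V)) : Finset (V × V) :=
  W ∪ M.filter (fun p => p.1 ∉ W.image Prod.fst)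

theorem image_fst_extendMatching (W M : Finset (V × V)) :
    (extendMatching W M).image Prod.fst = W.image Prod.fst ∪ M.image Prod.fst := by
  ext x
  simp only [extendMatching, Finset.image_union, Finset.mem_union, Finset.mem_image,
    Finset.mem_filter]
  constructor
  · rintro (hW | ⟨p, ⟨hpM, -⟩, rfl⟩)
    · exact Or.inl hW
    · exact Or.inr ⟨p, hpM, rfl⟩
  · rintro (hW | ⟨p, hpM, rfl⟩)
    · exact Or.inl hW
    · by_cases hpW : ∃ q ∈ W, q.1 = p.1
      · exact Or.inl hpW
      · exact Or.inr ⟨p, ⟨hpM, hpW⟩, rfl⟩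

theorem IsBipMatching.extendMatching {G : SimpleGraph V} {X' Y' : Finset V}
    {W M : Finset (V × V)} (hW : IsBipMatching G X' Y' W) (hM : IsBipMatching G X' Y' M)
    (hsnd : ∀ p ∈ M, p.1 ∉ W.image Prod.fst → p.2 ∉ W.image Prod.snd) :
    IsBipMatching G X' Y' (extendMatching W M) := by
  refine hW.union (hM.subset (Finset.filter_subset _ _)) ?_ ?_
  · refine Finset.disjoint_right.2 fun x hx hxW => ?_
    obtain ⟨p, hp, rfl⟩ := Finset.mem_image.1 hx
    exact (Finset.mem_filter.1 hp).2 hxW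
  · refine Finset.disjoint_right.2 fun y hy hyW => ?_
    obtain ⟨p, hp, rfl⟩ := Finset.mem_image.1 hy
    obtain ⟨hpM, hpW⟩ := Finset.mem_filter.1 hp
    exact hsnd p hpM hpW hyW

theorem EnvyFree.snd_notMem_image {G : SimpleGraph V} {X Y : Finset V} {W M : Finset (V × V)}
    (hEF : EnvyFree G X W) (hM : IsBipMatching G X Y M) :
    ∀ p ∈ M, p.1 ∉ W.image Prod.fst → p.2 ∉ W.image Prod.snd := fun p hp hpW hpW' =>
  hEF p.1 (hM.1 p hp).1 hpW p.2 hpW' (hM.1 p hp).2.2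

theorem envy_free_subset_saturating (G : SimpleGraph V) (X Y : Finset V)
    (hsat : ∃ M : Finset (V × V), IsBipMatching G X Y M ∧ X ⊆ M.image Prod.fst)
    (W : Finset (V × V)) (hW : IsBipMatching G X Y W) (hEF : EnvyFree G X W) :
    ∃ M' : Finset (V × V), IsBipMatching G X Y M' ∧ X ⊆ M'.image Prod.fst ∧
      W ⊆ M' := by
  obtain ⟨M, hM, hXM⟩ := hsat
  refine ⟨extendMatching W M, hW.extendMatching hM (hEF.snd_notMem_image hM), ?_,
    Finset.subset_union_left⟩
  rw [image_fst_extendMatching]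
  exact hXM.trans Finset.subset_union_right
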